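/- arXiv:cond-mat/0205548 — 3 statements merged into one kernel-verified Lean document; each statement's English description precedes it below -/
import Mathlib

section
/- (Theorem 1(i)) Assume W > 0 and 4I < zW. Then H_i^0 attains its minimum over all ion configurations at exactly two configurations: the configuration with n_{x,σ} = 1 for all x ∈ Λᵉ and all σ and n_{x,σ} = 0 for all x ∈ Λᵒ and all σ, and the configuration obtained by exchanging the roles of Λᵉ and Λᵒ. That is, each site of one sublattice is occupied by all r ions while the complementary sublattice is empty. -/
open Finset

/-- Occupation number (0 or 1) attached to a Boolean occupancy variable. -/
noncomputable def occ (b : Bool) : ℝ := if b then 1 else 0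

/-- Total number of ions at site `x` (as a real number): `n_x = Σ_σ n_{x,σ}`. -/
noncomputable def nsite {V : Type*} {r : ℕ} (C : V → Fin r → Bool) (x : V) : ℝ :=
  ∑ σ : Fin r, occ (C x σ)

/-- Total number of ions at site `x` (as a natural number). -/
def nnat {V : Type*} {r : ℕ} (C : V → Fin r → Bool) (x : V) : ℕ :=
  ∑ σ : Fin r, (if C x σ then 1 else 0)

/-- The classical Hamiltonian
`H_i^0(C) = 2I Σ_x Σ_{σ'<σ''} (n_{x,σ'} - 1/2)(n_{x,σ''} - 1/2)
          + (W/2) Σ_{⟨x,y⟩} (n_x - r/2)(n_y - r/2)`,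
where the sum over edges `⟨x,y⟩` (each edge counted once) is written as half the
symmetric double sum over ordered adjacent pairs. -/
noncomputable def H0 {V : Type*} [Fintype V] (G : SimpleGraph V) [DecidableRel G.Adj]
    (r : ℕ) (I W : ℝ) (C : V → Fin r → Bool) : ℝ :=
  2 * I * ∑ x : V, ∑ p ∈ Finset.univ.filter (fun p : Fin r × Fin r => p.1 < p.2),
      (occ (C x p.1) - 1 / 2) * (occ (C x p.2) - 1 / 2)
  + W / 2 * ((∑ x : V, ∑ y : V,
      (if G.Adj x y then (nsite C x - r / 2) * (nsite C y - r / 2) else 0)) / 2)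

/-!
Write `q_x = n_x - r/2`. As the occupations are `0/1`-valued, the on-site term equals
`I Σ_x (q_x² - r/4)`, and on a `z`-regular graph the bond term equals
`(W/8) Σ_{x~y} (q_x + q_y)² - (zW/4) Σ_x q_x²` (sums over ordered adjacent pairs). Hence
`H = E₀ + (zW/4 - I) Σ_x n_x (r - n_x) + (W/8) Σ_{x~y} (n_x + n_y - r)²`
with both coefficients positive and both sums nonnegative. The minimizers are therefore the
configurations in which every site is empty or full and neighbouring sites are complementary,
i.e. proper `2`-colourings of `G` by "full"/"empty"; a connected graph has exactly two of them.
-/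

theorem Finset.two_mul_sum_filter_lt_mul {ι R : Type*} [Fintype ι] [LinearOrder ι] [CommRing R]
    (a : ι → R) :
    2 * ∑ p ∈ univ.filter (fun p : ι × ι => p.1 < p.2), a p.1 * a p.2
      = (∑ i, a i) ^ 2 - ∑ i, a i ^ 2 := by
  have hsplit : ∀ i j, a i * a j = (if i < j then a i * a j else 0)
      + (if j < i then a j * a i else 0) + (if i = j then a i ^ 2 else 0) := by
    intro i j
    rcases lt_trichotomy i j with h | rfl | h
    · simp [h, h.not_gt, h.ne]
    · simp [sq]
    · simp [h, h.not_gt, h.ne', mul_comm]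
  have hswap : ∑ i, ∑ j, (if j < i then a j * a i else 0)
      = ∑ i, ∑ j, (if i < j then a i * a j else 0) := Finset.sum_comm
  rw [sq, Finset.sum_mul_sum, Finset.sum_filter, Fintype.sum_prod_type,
    Finset.sum_congr rfl fun i _ => Finset.sum_congr rfl fun j _ => hsplit i j]
  simp only [Finset.sum_add_distrib, hswap, Finset.sum_ite_eq, Finset.mem_univ, if_true]
  ring

namespace SimpleGraph

variable {V R : Type*} {G : SimpleGraph V}

theorem Preconnected.eq_or_eq_not_of_adj_ne (hG : G.Preconnected) {f g : V → Bool}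
    (hf : ∀ x y, G.Adj x y → f x ≠ f y) (hg : ∀ x y, G.Adj x y → g x ≠ g y) :
    f = g ∨ f = fun x => !g x := by
  have hagree : ∀ u v, f u = g u ↔ f v = g v := by
    intro u v
    obtain ⟨p⟩ := hG u v
    have h : (f u ↔ f v) ↔ (g u ↔ g v) :=
      ((Coloring.mk f fun h => hf _ _ h).even_length_iff_congr p).symm.trans
        ((Coloring.mk g fun h => hg _ _ h).even_length_iff_congr p)
    revert h
    cases f u <;> cases f v <;> cases g u <;> cases g v <;> simp
  by_cases h : ∃ u, f u = g u
  · obtain ⟨u, hu⟩ := h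
    exact Or.inl (funext fun v => (hagree u v).1 hu)
  · push Not at h
    exact Or.inr (funext fun v => Bool.eq_not_iff.2 (h v))

variable [Fintype V] [DecidableRel G.Adj] {z : ℕ} [CommSemiring R]

theorem IsRegularOfDegree.sum_sum_ite_adj (hreg : G.IsRegularOfDegree z) (g : V → R) :
    ∑ x, ∑ y, (if G.Adj x y then g x else 0) = z * ∑ x, g x := by
  rw [Finset.mul_sum]
  refine Finset.sum_congr rfl fun x _ => ?_
  rw [← Finset.sum_filter, Finset.sum_const, ← neighborFinset_eq_filter,
    card_neighborFinset_eq_degree, hreg x, nsmul_eq_mul]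

theorem IsRegularOfDegree.sum_sum_ite_adj_add_sq (hreg : G.IsRegularOfDegree z) (f : V → R) :
    ∑ x, ∑ y, (if G.Adj x y then (f x + f y) ^ 2 else 0)
      = 2 * (z * ∑ x, f x ^ 2 + ∑ x, ∑ y, if G.Adj x y then f x * f y else 0) := by
  have hleft := hreg.sum_sum_ite_adj fun x => f x ^ 2
  have hright : ∑ x, ∑ y, (if G.Adj x y then f y ^ 2 else 0) = z * ∑ x, f x ^ 2 := by
    rw [Finset.sum_comm]
    simpa only [G.adj_comm] using hleft
  calc ∑ x, ∑ y, (if G.Adj x y then (f x + f y) ^ 2 else 0)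
      = ∑ x, ∑ y, ((if G.Adj x y then f x ^ 2 else 0)
          + 2 * (if G.Adj x y then f x * f y else 0) + (if G.Adj x y then f y ^ 2 else 0)) :=
        Finset.sum_congr rfl fun x _ => Finset.sum_congr rfl fun y _ => by split_ifs <;> ring
    _ = _ := by
        simp only [Finset.sum_add_distrib, ← Finset.mul_sum, hleft, hright]
        ring

end SimpleGraph

section Ions

variable {V : Type*} {r : ℕ}

theorem occ_sub_half_sq (b : Bool) : (occ b - 1 / 2) ^ 2 = 1 / 4 := by
  cases b <;> norm_num [occ]

theorem nsite_eq_card (C : V → Fin r → Bool) (x : V) :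
    nsite C x = #{σ | C x σ = true} := by
  simp [nsite, occ, Finset.sum_boole]

theorem nsite_nonneg (C : V → Fin r → Bool) (x : V) : 0 ≤ nsite C x := by
  rw [nsite_eq_card]; positivity

theorem nsite_le (C : V → Fin r → Bool) (x : V) : nsite C x ≤ r := by
  rw [nsite_eq_card]
  exact_mod_cast (card_filter_le _ _).trans_eq (card_fin r)

theorem nsite_eq_zero_iff {C : V → Fin r → Bool} {x : V} :
    nsite C x = 0 ↔ ∀ σ, C x σ = false := by
  rw [nsite_eq_card, Nat.cast_eq_zero, card_filter_eq_zero_iff]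
  simp

theorem nsite_eq_natCast_iff {C : V → Fin r → Bool} {x : V} :
    nsite C x = r ↔ ∀ σ, C x σ = true := by
  rw [nsite_eq_card, Nat.cast_inj]
  conv_lhs => rhs; rw [← card_fin r]
  rw [card_filter_eq_iff]
  simp

theorem nsite_const (f : V → Bool) (x : V) :
    nsite (fun x (_ : Fin r) => f x) x = r * occ (f x) := by
  simp [nsite]

theorem sum_pairs_occ_sub_half (C : V → Fin r → Bool) (x : V) :
    ∑ p ∈ univ.filter (fun p : Fin r × Fin r => p.1 < p.2),
      (occ (C x p.1) - 1 / 2) * (occ (C x p.2) - 1 / 2)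
      = ((nsite C x - r / 2) ^ 2 - r / 4) / 2 := by
  have h := Finset.two_mul_sum_filter_lt_mul fun σ => occ (C x σ) - 1 / 2
  simp only [occ_sub_half_sq, sum_sub_distrib, sum_const, card_univ, Fintype.card_fin,
    nsmul_eq_mul] at h
  rw [nsite]
  linarith

variable [Fintype V]

noncomputable def fillingDefect (C : V → Fin r → Bool) : ℝ :=
  ∑ x, nsite C x * (r - nsite C x)

noncomputable def bondDefect (G : SimpleGraph V) [DecidableRel G.Adj]
    (C : V → Fin r → Bool) : ℝ :=
  ∑ x, ∑ y, if G.Adj x y then (nsite C x + nsite C y - r) ^ 2 else 0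

theorem fillingDefect_nonneg (C : V → Fin r → Bool) : 0 ≤ fillingDefect C :=
  sum_nonneg fun x _ => mul_nonneg (nsite_nonneg C x) (sub_nonneg.2 (nsite_le C x))

theorem bondDefect_nonneg (G : SimpleGraph V) [DecidableRel G.Adj] (C : V → Fin r → Bool) :
    0 ≤ bondDefect G C :=
  sum_nonneg fun _ _ => sum_nonneg fun _ _ => by split_ifs <;> positivity

theorem H0_eq {G : SimpleGraph V} [DecidableRel G.Adj] {z : ℕ} (hreg : G.IsRegularOfDegree z)
    (I W : ℝ) (C : V → Fin r → Bool) :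
    H0 G r I W C = Fintype.card V * ((I - z * W / 4) * r ^ 2 / 4 - I * r / 4)
      + (z * W / 4 - I) * fillingDefect C + W / 8 * bondDefect G C := by
  have hbonds := hreg.sum_sum_ite_adj_add_sq fun x => nsite C x - r / 2
  have hbond : bondDefect G C = ∑ x, ∑ y,
      (if G.Adj x y then (nsite C x - r / 2 + (nsite C y - r / 2)) ^ 2 else 0) :=
    sum_congr rfl fun x _ => sum_congr rfl fun y _ => by split_ifs <;> ring
  have hfill : fillingDefect C = Fintype.card V * r ^ 2 / 4 - ∑ x, (nsite C x - r / 2) ^ 2 := by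
    rw [fillingDefect, eq_sub_iff_add_eq, ← sum_add_distrib, sum_congr rfl fun x _ =>
      show nsite C x * (r - nsite C x) + (nsite C x - r / 2) ^ 2 = (r : ℝ) ^ 2 / 4 by ring]
    simp only [sum_const, card_univ, nsmul_eq_mul]
    ring
  unfold H0
  rw [sum_congr rfl fun x _ => sum_pairs_occ_sub_half C x, ← sum_div, sum_sub_distrib, sum_const,
    card_univ, nsmul_eq_mul, hfill, hbond, hbonds]
  ring

theorem fillingDefect_eq_zero_iff (hr : 0 < r) {C : V → Fin r → Bool} :
    fillingDefect C = 0 ↔ ∃ f : V → Bool, C = fun x _ => f x := by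
  constructor
  · intro h
    have hsite : ∀ x, nsite C x = 0 ∨ nsite C x = r := fun x => by
      have := (sum_eq_zero_iff_of_nonneg fun x _ => mul_nonneg (nsite_nonneg C x)
        (sub_nonneg.2 (nsite_le C x))).1 h x (mem_univ x)
      rcases mul_eq_zero.1 this with h0 | hfull
      exacts [Or.inl h0, Or.inr (sub_eq_zero.1 hfull).symm]
    refine ⟨fun x => C x ⟨0, hr⟩, funext fun x => funext fun σ => ?_⟩
    rcases hsite x with h0 | hfull
    · exact (nsite_eq_zero_iff.1 h0 σ).trans (nsite_eq_zero_iff.1 h0 _).symm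
    · exact (nsite_eq_natCast_iff.1 hfull σ).trans (nsite_eq_natCast_iff.1 hfull _).symm
  · rintro ⟨f, rfl⟩
    refine sum_eq_zero fun x _ => ?_
    rw [nsite_const]
    cases f x <;> simp [occ]

theorem bondDefect_const_eq_zero_iff (hr : 0 < r) {G : SimpleGraph V} [DecidableRel G.Adj]
    {f : V → Bool} :
    bondDefect G (fun x (_ : Fin r) => f x) = 0 ↔ ∀ x y, G.Adj x y → f x ≠ f y := by
  have hterm : ∀ x y,
      0 ≤ if G.Adj x y then ((r : ℝ) * occ (f x) + r * occ (f y) - r) ^ 2 else 0 :=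
    fun x y => by split_ifs <;> positivity
  simp only [bondDefect, nsite_const]
  rw [sum_eq_zero_iff_of_nonneg fun x _ => sum_nonneg fun y _ => hterm x y]
  simp only [mem_univ, forall_const, sum_eq_zero_iff_of_nonneg fun y _ => hterm _ y]
  refine forall_congr' fun x => forall_congr' fun y => ?_
  have : (r : ℝ) ≠ 0 := by positivity
  cases f x <;> cases f y <;> simp [occ, this]

end Ions

theorem setOf_forall_H0_le_eq {V : Type*} [Fintype V] {G : SimpleGraph V} [DecidableRel G.Adj]
    {z r : ℕ} (hreg : G.IsRegularOfDegree z) {I W : ℝ} (hW : 0 < W) (hIW : 4 * I < z * W)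
    (hground : {C : V → Fin r → Bool | fillingDefect C = 0 ∧ bondDefect G C = 0}.Nonempty) :
    {C | ∀ C', H0 G r I W C ≤ H0 G r I W C'}
      = {C | fillingDefect C = 0 ∧ bondDefect G C = 0} := by
  obtain ⟨C₀, hF₀, hB₀⟩ := hground
  ext C
  simp only [Set.mem_ofPred_eq, H0_eq hreg]
  have hF := fillingDefect_nonneg C
  have hB := bondDefect_nonneg G C
  constructor
  · intro hC
    have := hC C₀
    rw [hF₀, hB₀] at this
    constructor <;> nlinarith
  · rintro ⟨hF0, hB0⟩ C'
    rw [hF0, hB0]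
    nlinarith [fillingDefect_nonneg C', bondDefect_nonneg G C']

theorem setOf_defects_eq_zero {V : Type*} [Fintype V] {G : SimpleGraph V} [DecidableRel G.Adj]
    {r : ℕ} (hr : 0 < r) (hG : G.Preconnected) {c : V → Bool}
    (hc : ∀ x y, G.Adj x y → c x ≠ c y) :
    {C : V → Fin r → Bool | fillingDefect C = 0 ∧ bondDefect G C = 0}
      = {fun x _ => c x, fun x _ => !c x} := by
  ext C
  simp only [Set.mem_ofPred_eq, Set.mem_insert_iff, Set.mem_singleton_iff,
    fillingDefect_eq_zero_iff hr]
  constructor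
  · rintro ⟨⟨f, rfl⟩, hB⟩
    rcases hG.eq_or_eq_not_of_adj_ne ((bondDefect_const_eq_zero_iff hr).1 hB) hc with rfl | rfl
    exacts [Or.inl rfl, Or.inr rfl]
  · rintro (rfl | rfl)
    · exact ⟨⟨c, rfl⟩, (bondDefect_const_eq_zero_iff hr).2 hc⟩
    · refine ⟨⟨_, rfl⟩, (bondDefect_const_eq_zero_iff hr).2 fun x y h => ?_⟩
      simpa using hc x y h

theorem statement5_general
    {V : Type*} [Fintype V] [DecidableEq V]
    (G : SimpleGraph V) [DecidableRel G.Adj]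
    (z r : ℕ) (hr : 2 ≤ r)
    (hreg : G.IsRegularOfDegree z) (hconn : G.Connected)
    (Λe Λo : Finset V)
    (hcover : ∀ v : V, v ∈ Λe ∨ v ∈ Λo) (hdisj : Disjoint Λe Λo)
    (hbip : ∀ x y : V, G.Adj x y → (x ∈ Λe ∧ y ∈ Λo) ∨ (x ∈ Λo ∧ y ∈ Λe))
    (I W : ℝ) (hW : 0 < W) (hIW : 4 * I < (z : ℝ) * W) :
    {C : V → Fin r → Bool | ∀ C' : V → Fin r → Bool, H0 G r I W C ≤ H0 G r I W C'} =
      {fun x _ => decide (x ∈ Λe), fun x _ => decide (x ∈ Λo)} ∧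
    (fun (x : V) (_ : Fin r) => decide (x ∈ Λe)) ≠
      (fun (x : V) (_ : Fin r) => decide (x ∈ Λo)) := by
  have hΛo : ∀ x, decide (x ∈ Λo) = !decide (x ∈ Λe) := fun x => by
    rcases hcover x with h | h
    · simp [h, disjoint_left.1 hdisj h]
    · simp [h, disjoint_right.1 hdisj h]
  have hcolor : ∀ x y, G.Adj x y → decide (x ∈ Λe) ≠ decide (y ∈ Λe) := by
    intro x y hxy
    rcases hbip x y hxy with ⟨hx, hy⟩ | ⟨hx, hy⟩
    · simp [hx, disjoint_right.1 hdisj hy]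
    · simp [hy, disjoint_right.1 hdisj hx]
  have hground := setOf_defects_eq_zero (r := r) (by omega) hconn.preconnected hcolor
  simp only [hΛo]
  refine ⟨?_, fun h => ?_⟩
  · rw [setOf_forall_H0_le_eq hreg hW hIW (hground ▸ Set.insert_nonempty _ _), hground]
  · obtain ⟨v⟩ := hconn.nonempty
    simpa using congr_fun (congr_fun h v) ⟨0, by omega⟩

/-- **Theorem 1(i).** For `W > 0` and `4I < zW`, `H_i^0` attains its minimum
at exactly two configurations: all `r` ions on every site of one sublattice, the other
sublattice empty. -/
theorem statement5
    {V : Type*} [Fintype V] [DecidableEq V]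
    (G : SimpleGraph V) [DecidableRel G.Adj]
    (z r : ℕ) (hz : 2 ≤ z) (hr : 2 ≤ r)
    (hreg : G.IsRegularOfDegree z) (hconn : G.Connected)
    (Λe Λo : Finset V)
    (hcover : ∀ v : V, v ∈ Λe ∨ v ∈ Λo) (hdisj : Disjoint Λe Λo)
    (hbip : ∀ x y : V, G.Adj x y → (x ∈ Λe ∧ y ∈ Λo) ∨ (x ∈ Λo ∧ y ∈ Λe))
    (I W : ℝ) (hW : 0 < W) (hIW : 4 * I < (z : ℝ) * W) :
    {C : V → Fin r → Bool | ∀ C' : V → Fin r → Bool, H0 G r I W C ≤ H0 G r I W C'} =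
      {fun x _ => decide (x ∈ Λe), fun x _ => decide (x ∈ Λo)} ∧
    (fun (x : V) (_ : Fin r) => decide (x ∈ Λe)) ≠
      (fun (x : V) (_ : Fin r) => decide (x ∈ Λo)) :=
  statement5_general G z r hr hreg hconn Λe Λo hcover hdisj hbip I W hW hIW
end

section
/- (Theorem 1(iii)) Assume W > 0 and 4I = zW. Then every configuration of the following two kinds attains the minimum of H_i^0 over all ion configurations: (a) configurations in which each site of one sublattice is occupied by all r ions while the complementary sublattice is empty; (b) if r = 2k is even, every configuration with n_x = k for all x, and if r = 2k+1 is odd, every configuration with n_x = k on one sublattice and n_x = k+1 on the complementary sublattice. In particular all these configurations have equal energy H_i^0. -/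
open Finset

/-!
Write `m_x = n_x - r/2`. Since each `n_{x,σ} - 1/2 = ±1/2`, the on-site term at `x` is
`(m_x² - r/4)/2`, and on a `z`-regular graph `Σ_x z m_x²` is half of `Σ_{x~y} (m_x² + m_y²)`
(ordered adjacent pairs). Hence, when `4I = zW`, completing the square gives
`H_i^0 = (W/8) Σ_{x~y} (m_x + m_y)² - I r |Λ|/4`.
For `W ≥ 0` every configuration with `n_x + n_y = r` across every edge is therefore a
minimizer, and all the listed configurations are of this form.
-/

lemma sq_sum_eq_sum_sq_add_two_mul_sum_lt {ι R : Type*} [Fintype ι] [LinearOrder ι]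
    [CommSemiring R] (f : ι → R) :
    (∑ i, f i) ^ 2 =
      ∑ i, f i ^ 2 + 2 * ∑ p ∈ univ.filter (fun p : ι × ι => p.1 < p.2), f p.1 * f p.2 := by
  have hsplit : ∀ i j, f i * f j = (if i = j then f i ^ 2 else 0) +
      (if i < j then f i * f j else 0) + (if j < i then f j * f i else 0) := by
    intro i j
    rcases lt_trichotomy i j with h | rfl | h
    · simp [h, h.ne, h.not_gt]
    · simp [sq]
    · rw [if_neg h.ne', if_neg h.not_gt, if_pos h]
      ring
  have hswap : ∑ i, ∑ j, (if j < i then f j * f i else 0) =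
      ∑ i, ∑ j, (if i < j then f i * f j else 0) := sum_comm
  rw [sum_filter, Fintype.sum_prod_type, sq, sum_mul_sum]
  rw [sum_congr rfl fun i _ => sum_congr rfl fun j _ => hsplit i j]
  simp_rw [sum_add_distrib, sum_ite_eq, mem_univ, if_true, hswap]
  ring

lemma sum_lt_occ_sub_half_mul {V : Type*} {r : ℕ} (C : V → Fin r → Bool) (x : V) :
    ∑ p ∈ univ.filter (fun p : Fin r × Fin r => p.1 < p.2),
      (occ (C x p.1) - 1 / 2) * (occ (C x p.2) - 1 / 2)
    = ((nsite C x - r / 2) ^ 2 - r / 4) / 2 := by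
  have hsum : ∑ σ, (occ (C x σ) - 1 / 2) = nsite C x - r / 2 := by
    simp [sum_sub_distrib, nsite, div_eq_mul_inv]
  have hsq : ∀ σ, (occ (C x σ) - 1 / 2) ^ 2 = 1 / 4 := by
    intro σ
    cases C x σ <;> norm_num [occ]
  have h := sq_sum_eq_sum_sq_add_two_mul_sum_lt (fun σ => occ (C x σ) - 1 / 2)
  simp only [hsum, hsq, sum_const, card_univ, Fintype.card_fin, nsmul_eq_mul] at h
  linarith

lemma sum_ite_adj_of_isRegularOfDegree {V R : Type*} [Fintype V] [Semiring R]
    {G : SimpleGraph V} [DecidableRel G.Adj] {z : ℕ} (hreg : G.IsRegularOfDegree z)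
    (x : V) (c : R) :
    ∑ y, (if G.Adj x y then c else 0) = z * c := by
  rw [sum_ite, sum_const, sum_const_zero, add_zero, ← SimpleGraph.neighborFinset_eq_filter,
    ← SimpleGraph.degree, hreg x, nsmul_eq_mul]

lemma sum_adj_add_sq_eq {V : Type*} [Fintype V] {G : SimpleGraph V} [DecidableRel G.Adj]
    {z : ℕ} (hreg : G.IsRegularOfDegree z) (m : V → ℝ) :
    ∑ x, ∑ y, (if G.Adj x y then (m x + m y) ^ 2 else 0) =
      2 * z * ∑ x, m x ^ 2 + 2 * ∑ x, ∑ y, (if G.Adj x y then m x * m y else 0) := by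
  have hleft : ∑ x, ∑ y, (if G.Adj x y then m x ^ 2 else 0) = z * ∑ x, m x ^ 2 := by
    simp_rw [sum_ite_adj_of_isRegularOfDegree hreg, mul_sum]
  have hright : ∑ x, ∑ y, (if G.Adj x y then m y ^ 2 else 0) = z * ∑ x, m x ^ 2 := by
    rw [sum_comm, ← hleft]
    simp_rw [G.adj_comm]
  have hexpand : ∀ x y, (if G.Adj x y then (m x + m y) ^ 2 else 0) =
      (if G.Adj x y then m x ^ 2 else 0) + (if G.Adj x y then m y ^ 2 else 0) +
        2 * (if G.Adj x y then m x * m y else 0) := by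
    intro x y
    split_ifs <;> ring
  simp_rw [hexpand, sum_add_distrib, ← mul_sum, hleft, hright]
  ring

lemma H0_eq_of_four_mul_eq {V : Type*} [Fintype V] {G : SimpleGraph V} [DecidableRel G.Adj]
    {z : ℕ} (hreg : G.IsRegularOfDegree z) (r : ℕ) {I W : ℝ} (hIW : 4 * I = z * W)
    (C : V → Fin r → Bool) :
    H0 G r I W C =
      W / 8 * ∑ x, ∑ y, (if G.Adj x y then (nsite C x - r / 2 + (nsite C y - r / 2)) ^ 2 else 0)
        - I * r * Fintype.card V / 4 := by
  rw [H0, sum_adj_add_sq_eq hreg]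
  simp_rw [sum_lt_occ_sub_half_mul, ← sum_div, sum_sub_distrib, sum_const, card_univ,
    nsmul_eq_mul]
  linear_combination (∑ x, (nsite C x - r / 2) ^ 2) / 4 * hIW

lemma nsite_eq_nnat {V : Type*} {r : ℕ} (C : V → Fin r → Bool) (x : V) :
    nsite C x = nnat C x := by
  simp only [nsite, nnat, occ]
  push_cast
  rfl

lemma H0_le_of_adj_nnat_add_eq {V : Type*} [Fintype V] {G : SimpleGraph V}
    [DecidableRel G.Adj] {z r : ℕ} (hreg : G.IsRegularOfDegree z) {I W : ℝ} (hW : 0 ≤ W)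
    (hIW : 4 * I = z * W) {C : V → Fin r → Bool}
    (hC : ∀ x y, G.Adj x y → nnat C x + nnat C y = r) (C' : V → Fin r → Bool) :
    H0 G r I W C ≤ H0 G r I W C' := by
  have hzero : ∑ x, ∑ y,
      (if G.Adj x y then (nsite C x - r / 2 + (nsite C y - r / 2)) ^ 2 else (0 : ℝ)) = 0 := by
    refine sum_eq_zero fun x _ => sum_eq_zero fun y _ => ?_
    split_ifs with h
    · have hxy : (nnat C x : ℝ) + nnat C y = r := by exact_mod_cast hC x y h
      rw [nsite_eq_nnat, nsite_eq_nnat]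
      linear_combination (nnat C x - r / 2 + (nnat C y - r / 2)) * hxy
    · rfl
  have hnonneg : 0 ≤ ∑ x, ∑ y,
      (if G.Adj x y then (nsite C' x - r / 2 + (nsite C' y - r / 2)) ^ 2 else (0 : ℝ)) :=
    sum_nonneg fun x _ => sum_nonneg fun y _ => by split_ifs <;> positivity
  rw [H0_eq_of_four_mul_eq hreg r hIW, H0_eq_of_four_mul_eq hreg r hIW, hzero]
  nlinarith

lemma adj_nnat_add_eq_of_sublattices {V : Type*} {G : SimpleGraph V} {r a b : ℕ}
    {Λe Λo : Finset V} (hbip : ∀ x y, G.Adj x y → (x ∈ Λe ∧ y ∈ Λo) ∨ (x ∈ Λo ∧ y ∈ Λe))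
    {C : V → Fin r → Bool} (he : ∀ x ∈ Λe, nnat C x = a) (ho : ∀ x ∈ Λo, nnat C x = b)
    (hab : a + b = r) :
    ∀ x y, G.Adj x y → nnat C x + nnat C y = r := by
  intro x y hxy
  rcases hbip x y hxy with ⟨hx, hy⟩ | ⟨hx, hy⟩
  · rw [he x hx, ho y hy, hab]
  · rw [ho x hx, he y hy, add_comm, hab]

lemma nnat_decide_mem {V : Type*} [DecidableEq V] (r : ℕ) (s : Finset V) (x : V) :
    nnat (fun x (_ : Fin r) => decide (x ∈ s)) x = if x ∈ s then r else 0 := by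
  by_cases hx : x ∈ s <;> simp [nnat, hx]

theorem statement8_general
    {V : Type*} [Fintype V] [DecidableEq V]
    (G : SimpleGraph V) [DecidableRel G.Adj]
    (z r : ℕ)
    (hreg : G.IsRegularOfDegree z)
    (Λe Λo : Finset V)
    (hdisj : Disjoint Λe Λo)
    (hbip : ∀ x y : V, G.Adj x y → (x ∈ Λe ∧ y ∈ Λo) ∨ (x ∈ Λo ∧ y ∈ Λe))
    (I W : ℝ) (hW : 0 < W) (hIW : 4 * I = (z : ℝ) * W) :
    ∀ C : V → Fin r → Bool,
      ((C = fun x _ => decide (x ∈ Λe)) ∨ (C = fun x _ => decide (x ∈ Λo)) ∨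
        (∃ k : ℕ, r = 2 * k ∧ ∀ x : V, nnat C x = k) ∨
        (∃ k : ℕ, r = 2 * k + 1 ∧
          (((∀ x ∈ Λe, nnat C x = k) ∧ (∀ x ∈ Λo, nnat C x = k + 1)) ∨
           ((∀ x ∈ Λe, nnat C x = k + 1) ∧ (∀ x ∈ Λo, nnat C x = k))))) →
      ∀ C' : V → Fin r → Bool, H0 G r I W C ≤ H0 G r I W C' := by
  intro C hC
  refine H0_le_of_adj_nnat_add_eq hreg hW.le hIW ?_
  rcases hC with rfl | rfl | ⟨k, rfl, hk⟩ | ⟨k, rfl, ⟨he, ho⟩ | ⟨he, ho⟩⟩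
  · refine adj_nnat_add_eq_of_sublattices hbip (a := r) (b := 0) ?_ ?_ rfl <;>
      intro x hx <;> simp [nnat_decide_mem, hx, disjoint_right.mp hdisj]
  · refine adj_nnat_add_eq_of_sublattices hbip (a := 0) (b := r) ?_ ?_ (zero_add r) <;>
      intro x hx <;> simp [nnat_decide_mem, hx, disjoint_left.mp hdisj]
  · exact adj_nnat_add_eq_of_sublattices hbip (fun x _ => hk x) (fun x _ => hk x) (two_mul k).symm
  · exact adj_nnat_add_eq_of_sublattices hbip he ho (by ring)
  · exact adj_nnat_add_eq_of_sublattices hbip he ho (by ring)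

/-- **Theorem 1(iii).** For `W > 0` and `4I = zW`, every configuration of
kind (a) (one sublattice fully occupied by all `r` ions, the other empty) or of kind (b)
(`n_x = k` everywhere if `r = 2k`; `n_x = k` on one sublattice and `n_x = k+1` on the
other if `r = 2k+1`) minimizes `H_i^0`; in particular all of them have equal energy. -/
theorem statement8
    {V : Type*} [Fintype V] [DecidableEq V]
    (G : SimpleGraph V) [DecidableRel G.Adj]
    (z r : ℕ) (hz : 2 ≤ z) (hr : 2 ≤ r)
    (hreg : G.IsRegularOfDegree z) (hconn : G.Connected)
    (Λe Λo : Finset V)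
    (hcover : ∀ v : V, v ∈ Λe ∨ v ∈ Λo) (hdisj : Disjoint Λe Λo)
    (hbip : ∀ x y : V, G.Adj x y → (x ∈ Λe ∧ y ∈ Λo) ∨ (x ∈ Λo ∧ y ∈ Λe))
    (I W : ℝ) (hW : 0 < W) (hIW : 4 * I = (z : ℝ) * W) :
    ∀ C : V → Fin r → Bool,
      ((C = fun x _ => decide (x ∈ Λe)) ∨ (C = fun x _ => decide (x ∈ Λo)) ∨
        (∃ k : ℕ, r = 2 * k ∧ ∀ x : V, nnat C x = k) ∨
        (∃ k : ℕ, r = 2 * k + 1 ∧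
          (((∀ x ∈ Λe, nnat C x = k) ∧ (∀ x ∈ Λo, nnat C x = k + 1)) ∨
           ((∀ x ∈ Λe, nnat C x = k + 1) ∧ (∀ x ∈ Λo, nnat C x = k))))) →
      ∀ C' : V → Fin r → Bool, H0 G r I W C ≤ H0 G r I W C' :=
  statement8_general G z r hreg Λe Λo hdisj hbip I W hW hIW
end

section
/- (Region B of the atomic-limit phase diagram) Let r = 2. Assume W > 0, I > zW/4, and |μ| < I. Then H(C) = H_i^0(C) − μ·N_i(C) attains its minimum over all ion configurations exactly at the configurations with n_x = 1 for every site x ∈ Λ (each site singly occupied, with arbitrary species); the number of such minimizing configurations equals 2^{|Λ|}. -/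
open Finset

/-- Total ion number `N_i(C) = Σ_{x,σ} n_{x,σ}` (as a real number). -/
noncomputable def Ni {V : Type*} {r : ℕ} [Fintype V] (C : V → Fin r → Bool) : ℝ :=
  ∑ x : V, ∑ σ : Fin r, occ (C x σ)

/-- Grand-canonical classical Hamiltonian `H(C) = H_i^0(C) − μ·N_i(C)` for two species. -/
noncomputable def Hgc {V : Type*} [Fintype V] (G : SimpleGraph V) [DecidableRel G.Adj]
    (I W μ : ℝ) (C : V → Fin 2 → Bool) : ℝ :=
  H0 G 2 I W C - μ * Ni C

/-! Write `a_x = n_x - 1 ∈ {-1, 0, 1}`. Up to the constant `|Λ| (-I/2 - μ)`, attained by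
single occupation, the energy is `Σ_x (I a_x² - μ a_x) + (W/2) Σ_{⟨x,y⟩} a_x a_y`. Since every
site lies on `z` bonds, `2z` times this is a sum over ordered adjacent pairs of the bond energy
`(I a² - μ a) + (I b² - μ b) + (zW/2) a b`, which is nonnegative on `{-1, 0, 1}²` and positive
when `a ≠ 0`: for `a = -b = ±1` the chemical potential cancels and the bond costs
`2I - zW/2 > 0`, in all other cases `|μ| < I` suffices. -/

namespace SimpleGraph.IsRegularOfDegree

variable {V : Type*} [Fintype V] {G : SimpleGraph V} [DecidableRel G.Adj] {z : ℕ}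
  (hreg : G.IsRegularOfDegree z) (f : V → ℝ)
include hreg

lemma sum_sum_ite_adj_left :
    ∑ x : V, ∑ y : V, (if G.Adj x y then f x else 0) = z * ∑ x : V, f x := by
  rw [Finset.mul_sum]
  refine Finset.sum_congr rfl fun x _ => ?_
  rw [← Finset.sum_filter, Finset.sum_const, ← neighborFinset_eq_filter,
    card_neighborFinset_eq_degree, hreg x, nsmul_eq_mul]

lemma sum_sum_ite_adj_right :
    ∑ x : V, ∑ y : V, (if G.Adj x y then f y else 0) = z * ∑ x : V, f x := by
  rw [Finset.sum_comm, ← hreg.sum_sum_ite_adj_left]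
  simp only [G.adj_comm]

end SimpleGraph.IsRegularOfDegree

noncomputable def excess {V : Type*} (C : V → Fin 2 → Bool) (x : V) : ℝ := nsite C x - 1

def siteEnergy (I μ a : ℝ) : ℝ := I * a ^ 2 - μ * a

def bondEnergy (I μ K a b : ℝ) : ℝ := siteEnergy I μ a + siteEnergy I μ b + K * (a * b)

section Excess

variable {V : Type*} (C : V → Fin 2 → Bool) (x : V)

lemma excess_trichotomy : excess C x = -1 ∨ excess C x = 0 ∨ excess C x = 1 := by
  simp only [excess, nsite, Fin.sum_univ_two, occ]
  cases C x 0 <;> cases C x 1 <;> norm_num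

lemma excess_eq_zero_iff : excess C x = 0 ↔ nnat C x = 1 := by
  simp only [excess, nsite, nnat, Fin.sum_univ_two, occ]
  cases C x 0 <;> cases C x 1 <;> norm_num

end Excess

lemma bondEnergy_nonneg {I μ K a b : ℝ} (hK : 0 ≤ K) (hKI : K < 2 * I) (hμ : |μ| < I)
    (ha : a = -1 ∨ a = 0 ∨ a = 1) (hb : b = -1 ∨ b = 0 ∨ b = 1) :
    0 ≤ bondEnergy I μ K a b := by
  obtain ⟨hμl, hμu⟩ := abs_lt.mp hμ
  rcases ha with rfl | rfl | rfl <;> rcases hb with rfl | rfl | rfl <;>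
    · simp only [bondEnergy, siteEnergy]; linarith

lemma bondEnergy_pos {I μ K a b : ℝ} (hK : 0 ≤ K) (hKI : K < 2 * I) (hμ : |μ| < I)
    (ha : a = -1 ∨ a = 1) (hb : b = -1 ∨ b = 0 ∨ b = 1) :
    0 < bondEnergy I μ K a b := by
  obtain ⟨hμl, hμu⟩ := abs_lt.mp hμ
  rcases ha with rfl | rfl <;> rcases hb with rfl | rfl | rfl <;>
    · simp only [bondEnergy, siteEnergy]; linarith

lemma ite_adj_bondEnergy_nonneg {V : Type*} {G : SimpleGraph V} [DecidableRel G.Adj] {z : ℕ}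
    {I W μ : ℝ} (hW : 0 ≤ W) (hIW : z * W / 4 < I) (hμ : |μ| < I) (C : V → Fin 2 → Bool)
    (x y : V) :
    0 ≤ if G.Adj x y then bondEnergy I μ (z * W / 2) (excess C x) (excess C y) else 0 := by
  split_ifs
  · exact bondEnergy_nonneg (by positivity) (by linarith) hμ (excess_trichotomy C x)
      (excess_trichotomy C y)
  · exact le_rfl

section Energy

variable {V : Type*} [Fintype V] (G : SimpleGraph V) [DecidableRel G.Adj]

lemma Hgc_eq (I W μ : ℝ) (C : V → Fin 2 → Bool) :
    Hgc G I W μ C = Fintype.card V * (-(I / 2) - μ) + ∑ x : V, siteEnergy I μ (excess C x) +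
      W / 4 * ∑ x : V, ∑ y : V, (if G.Adj x y then excess C x * excess C y else 0) := by
  have hpairs : (univ.filter fun p : Fin 2 × Fin 2 => p.1 < p.2) = {(0, 1)} := by decide
  have hsite : ∀ x, 2 * I * ((occ (C x 0) - 1 / 2) * (occ (C x 1) - 1 / 2)) -
      μ * ∑ σ : Fin 2, occ (C x σ) = -(I / 2) - μ + siteEnergy I μ (excess C x) := by
    intro x
    simp only [excess, nsite, Fin.sum_univ_two, siteEnergy, occ]
    cases C x 0 <;> cases C x 1 <;> norm_num <;> ring
  have hsites : 2 * I * ∑ x : V, (occ (C x 0) - 1 / 2) * (occ (C x 1) - 1 / 2) - μ * Ni C =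
      Fintype.card V * (-(I / 2) - μ) + ∑ x : V, siteEnergy I μ (excess C x) := by
    rw [Ni, mul_sum, mul_sum, ← sum_sub_distrib, sum_congr rfl fun x _ => hsite x,
      sum_add_distrib, sum_const, card_univ, nsmul_eq_mul]
  have hbond : ∀ x y, (if G.Adj x y then (nsite C x - ((2 : ℕ) : ℝ) / 2) *
      (nsite C y - ((2 : ℕ) : ℝ) / 2) else 0) =
      if G.Adj x y then excess C x * excess C y else 0 := by
    norm_num [excess]
  simp only [Hgc, H0, hpairs, sum_singleton, hbond]
  linarith

lemma Hgc_eq_of_forall_nnat_eq_one (I W μ : ℝ) {C : V → Fin 2 → Bool}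
    (hC : ∀ x, nnat C x = 1) : Hgc G I W μ C = Fintype.card V * (-(I / 2) - μ) := by
  simp [Hgc_eq, (excess_eq_zero_iff C _).mpr (hC _), siteEnergy]

variable {G} {z : ℕ} (hreg : G.IsRegularOfDegree z) {I W μ : ℝ}
include hreg

lemma two_mul_deg_mul_Hgc_sub (C : V → Fin 2 → Bool) :
    2 * z * (Hgc G I W μ C - Fintype.card V * (-(I / 2) - μ)) =
      ∑ x : V, ∑ y : V, (if G.Adj x y then
        bondEnergy I μ (z * W / 2) (excess C x) (excess C y) else 0) := by
  have hsplit : ∀ x y, (if G.Adj x y then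
      bondEnergy I μ (z * W / 2) (excess C x) (excess C y) else 0) =
      (if G.Adj x y then siteEnergy I μ (excess C x) else 0) +
        (if G.Adj x y then siteEnergy I μ (excess C y) else 0) +
        z * W / 2 * (if G.Adj x y then excess C x * excess C y else 0) := by
    intro x y
    split_ifs <;> simp [bondEnergy]
  simp only [hsplit, sum_add_distrib, ← mul_sum, hreg.sum_sum_ite_adj_left,
    hreg.sum_sum_ite_adj_right, Hgc_eq]
  ring

variable (hz : 0 < z) (hW : 0 ≤ W) (hIW : z * W / 4 < I) (hμ : |μ| < I)
include hz hW hIW hμ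

lemma card_mul_lt_Hgc_of_excess_ne_zero (C : V → Fin 2 → Bool) {x₀ : V}
    (hx₀ : excess C x₀ ≠ 0) :
    Fintype.card V * (-(I / 2) - μ) < Hgc G I W μ C := by
  obtain ⟨y₀, hy₀⟩ : ∃ y, G.Adj x₀ y :=
    (G.degree_pos_iff_exists_adj x₀).mp (hreg x₀ ▸ hz)
  have hx₀' : excess C x₀ = -1 ∨ excess C x₀ = 1 := by
    rcases excess_trichotomy C x₀ with h | h | h
    exacts [Or.inl h, absurd h hx₀, Or.inr h]
  have hsum : 0 < 2 * z * (Hgc G I W μ C - Fintype.card V * (-(I / 2) - μ)) := by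
    rw [two_mul_deg_mul_Hgc_sub hreg]
    refine sum_pos' (fun x _ => sum_nonneg fun y _ => ite_adj_bondEnergy_nonneg hW hIW hμ C x y)
      ⟨x₀, mem_univ x₀, sum_pos' (fun y _ => ite_adj_bondEnergy_nonneg hW hIW hμ C x₀ y)
        ⟨y₀, mem_univ y₀, ?_⟩⟩
    rw [if_pos hy₀]
    exact bondEnergy_pos (by positivity) (by linarith) hμ hx₀' (excess_trichotomy C y₀)
  have hz' : (0 : ℝ) < 2 * z := by positivity
  exact sub_pos.mp (pos_of_mul_pos_right hsum hz'.le)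

end Energy

lemma setOf_forall_le_eq_of_lt {α β : Type*} [LinearOrder β] {f : α → β} {m : β}
    {P : α → Prop} (hP : ∃ a, P a) (heq : ∀ a, P a → f a = m)
    (hlt : ∀ a, ¬P a → m < f a) :
    {a | ∀ b, f a ≤ f b} = {a | P a} := by
  ext a
  constructor
  · intro ha
    by_contra hna
    obtain ⟨b, hb⟩ := hP
    exact (hlt a hna).not_ge (heq b hb ▸ ha b)
  · intro ha b
    rw [heq a ha]
    by_cases hb : P b
    · rw [heq b hb]
    · exact (hlt b hb).le

lemma card_setOf_forall_nnat_eq_one (V : Type*) [Fintype V] :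
    Nat.card {C : V → Fin 2 → Bool | ∀ x, nnat C x = 1} = 2 ^ Fintype.card V := by
  have hsite :
      Nat.card {s : Fin 2 → Bool // ∑ σ : Fin 2, (if s σ then 1 else 0) = 1} = 2 := by
    rw [Nat.card_eq_fintype_card]
    decide
  calc Nat.card {C : V → Fin 2 → Bool | ∀ x, nnat C x = 1}
      = Nat.card (V → {s : Fin 2 → Bool // ∑ σ : Fin 2, (if s σ then 1 else 0) = 1}) :=
        Nat.card_congr (Equiv.subtypePiEquivPi
          (p := fun _ (s : Fin 2 → Bool) => ∑ σ : Fin 2, (if s σ then 1 else 0) = 1))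
    _ = 2 ^ Fintype.card V := by rw [Nat.card_fun, hsite, Nat.card_eq_fintype_card]

theorem statement16_general
    {V : Type*} [Fintype V]
    (G : SimpleGraph V) [DecidableRel G.Adj]
    (z : ℕ) (hz : 2 ≤ z)
    (hreg : G.IsRegularOfDegree z)
    (I W μ : ℝ) (hW : 0 < W) (hIW : (z : ℝ) * W / 4 < I) (hmu : |μ| < I) :
    {C : V → Fin 2 → Bool | ∀ C' : V → Fin 2 → Bool, Hgc G I W μ C ≤ Hgc G I W μ C'} =
      {C : V → Fin 2 → Bool | ∀ x : V, nnat C x = 1} ∧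
    Nat.card {C : V → Fin 2 → Bool |
        ∀ C' : V → Fin 2 → Bool, Hgc G I W μ C ≤ Hgc G I W μ C'} =
      2 ^ (Fintype.card V) := by
  have hminimizers : {C : V → Fin 2 → Bool | ∀ C', Hgc G I W μ C ≤ Hgc G I W μ C'} =
      {C | ∀ x, nnat C x = 1} := by
    refine setOf_forall_le_eq_of_lt ⟨fun _ σ => σ = 0, fun _ => rfl⟩
      (fun C hC => Hgc_eq_of_forall_nnat_eq_one G I W μ hC) fun C hC => ?_
    obtain ⟨x, hx⟩ := not_forall.mp hC
    exact card_mul_lt_Hgc_of_excess_ne_zero hreg (by omega) hW.le hIW hmu C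
      (mt (excess_eq_zero_iff C x).mp hx)
  exact ⟨hminimizers, hminimizers ▸ card_setOf_forall_nnat_eq_one V⟩

/-- **Region B.** For `W > 0`, `I > zW/4` and `|μ| < I`, the minimizers of
`H(C) = H_i^0(C) − μ·N_i(C)` are exactly the configurations with every site singly
occupied, and their number is `2^{|Λ|}`. -/
theorem statement16
    {V : Type*} [Fintype V] [DecidableEq V]
    (G : SimpleGraph V) [DecidableRel G.Adj]
    (z : ℕ) (hz : 2 ≤ z)
    (hreg : G.IsRegularOfDegree z) (hconn : G.Connected)
    (Λe Λo : Finset V)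
    (hcover : ∀ v : V, v ∈ Λe ∨ v ∈ Λo) (hdisj : Disjoint Λe Λo)
    (hbip : ∀ x y : V, G.Adj x y → (x ∈ Λe ∧ y ∈ Λo) ∨ (x ∈ Λo ∧ y ∈ Λe))
    (I W μ : ℝ) (hW : 0 < W) (hIW : (z : ℝ) * W / 4 < I) (hmu : |μ| < I) :
    {C : V → Fin 2 → Bool | ∀ C' : V → Fin 2 → Bool, Hgc G I W μ C ≤ Hgc G I W μ C'} =
      {C : V → Fin 2 → Bool | ∀ x : V, nnat C x = 1} ∧
    Nat.card {C : V → Fin 2 → Bool |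
        ∀ C' : V → Fin 2 → Bool, Hgc G I W μ C ≤ Hgc G I W μ C'} =
      2 ^ (Fintype.card V) :=
  statement16_general G z hz hreg I W μ hW hIW hmu
end
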